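/- arXiv:1603.04481 — 6 statements merged into one kernel-verified Lean document; each statement's English description precedes it below -/
import Mathlib

section
/- If K is a convex body in ℝⁿ whose centroid is the origin, then K ⊆ -nK. -/
/-!
Fix `p ∈ K` and let `n = dim E`. If `-p ∉ n • K`, a functional `ℓ` separates them; if
`ℓ` attains its maximum over `K` at `q`, this says `n ℓ(q) < -ℓ(p)`. To contradict it, put
`u = ℓ - ℓ(p)` and `V = vol K`. For `0 < r < 1` the homothety `h` of ratio `r` about `p` maps
`K` into itself, `∫_{h K} u = r^(n+1) ∫_K u`, and `u ≤ ℓ(q) - ℓ(p)` on the shell `K \ h K` of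
volume `(1 - r^n) V`. Hence `(1 - r^(n+1)) ∫_K u ≤ (1 - r^n) V (ℓ(q) - ℓ(p))`, and letting
`r → 1` gives `(n + 1) ∫_K u ≤ n V (ℓ(q) - ℓ(p))`. Since the centroid is the origin,
`∫_K u = -V ℓ(p)`, so `-ℓ(p) ≤ n ℓ(q)`.
-/

open MeasureTheory Pointwise Set Filter Topology Module

theorem mul_le_mul_of_forall_one_sub_pow_le {a b : ℝ} {n : ℕ}
    (h : ∀ r ∈ Ioo (0 : ℝ) 1, a * (1 - r ^ (n + 1)) ≤ b * (1 - r ^ n)) :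
    (n + 1) * a ≤ n * b := by
  have hsum : ∀ r ∈ Ioo (0 : ℝ) 1,
      a * ∑ i ∈ Finset.range (n + 1), r ^ i ≤ b * ∑ i ∈ Finset.range n, r ^ i := by
    intro r hr
    have h1r : 0 < 1 - r := sub_pos.2 hr.2
    rw [← mul_le_mul_iff_of_pos_left h1r]
    calc (1 - r) * (a * ∑ i ∈ Finset.range (n + 1), r ^ i)
        = a * (1 - r ^ (n + 1)) := by rw [← mul_neg_geom_sum]; ring
      _ ≤ b * (1 - r ^ n) := h r hr
      _ = (1 - r) * (b * ∑ i ∈ Finset.range n, r ^ i) := by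
        rw [← mul_neg_geom_sum]; ring
  have hlim : ∀ m : ℕ, Tendsto (fun r : ℝ => ∑ i ∈ Finset.range m, r ^ i) (𝓝[<] 1) (𝓝 m) := by
    intro m
    have : Continuous (fun r : ℝ => ∑ i ∈ Finset.range m, r ^ i) := by fun_prop
    simpa using (this.tendsto 1).mono_left nhdsWithin_le_nhds
  have hev : ∀ᶠ r in 𝓝[<] (1 : ℝ), r ∈ Ioo (0 : ℝ) 1 := Ioo_mem_nhdsLT zero_lt_one
  simpa [mul_comm] using
    le_of_tendsto_of_tendsto ((hlim (n + 1)).const_mul a) ((hlim n).const_mul b)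
      (hev.mono hsum)

theorem Convex.image_homothety_subset {𝕜 E : Type*} [CommRing 𝕜] [PartialOrder 𝕜] [IsOrderedRing 𝕜]
    [AddCommGroup E] [Module 𝕜 E] {K : Set E} (hK : Convex 𝕜 K) {p : E} (hp : p ∈ K)
    {r : 𝕜} (hr : r ∈ Icc (0 : 𝕜) 1) : AffineMap.homothety p r '' K ⊆ K := by
  rintro _ ⟨x, hx, rfl⟩
  exact hK.lineMap_mem hp hx hr

section AddHaar

variable {E : Type*} [NormedAddCommGroup E] [NormedSpace ℝ E] [FiniteDimensional ℝ E]
  [MeasurableSpace E] [BorelSpace E] (μ : Measure E) [μ.IsAddHaarMeasure]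

theorem setIntegral_image_homothety {F : Type*} [NormedAddCommGroup F] [NormedSpace ℝ F]
    (g : E → F) (p : E) {r : ℝ} (hr : r ≠ 0) {s : Set E} (hs : MeasurableSet s) :
    ∫ x in AffineMap.homothety p r '' s, g x ∂μ =
      |r ^ finrank ℝ E| • ∫ x in s, g (AffineMap.homothety p r x) ∂μ := by
  have hderiv : ∀ x,
      HasFDerivAt (AffineMap.homothety p r) (r • ContinuousLinearMap.id ℝ E) x := by
    intro x
    rw [AffineMap.coe_homothety]
    exact (((hasFDerivAt_id (𝕜 := ℝ) x).sub_const p).const_smul r).add_const p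
  rw [integral_image_eq_integral_abs_det_fderiv_smul μ hs
    (fun x _ => (hderiv x).hasFDerivWithinAt)
    ((AffineEquiv.homothetyUnitsMulHom p (Units.mk0 r hr)).injective.injOn), integral_smul]
  have hdet : (r • ContinuousLinearMap.id ℝ E).det = r ^ finrank ℝ E := by
    change LinearMap.det (r • LinearMap.id) = _
    rw [LinearMap.det_smul, LinearMap.det_id, mul_one]
  rw [hdet]

theorem Convex.mul_setIntegral_sub_le {K : Set E} (hK : IsCompact K) (hKc : Convex ℝ K)
    {p : E} (hp : p ∈ K) (ℓ : StrongDual ℝ E) {s : ℝ} (hs : ∀ x ∈ K, ℓ x ≤ s) :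
    (finrank ℝ E + 1) * ∫ x in K, (ℓ x - ℓ p) ∂μ ≤ finrank ℝ E * (μ.real K * (s - ℓ p)) := by
  apply mul_le_mul_of_forall_one_sub_pow_le
  intro r hr
  set T := AffineMap.homothety p r '' K
  have hTK : T ⊆ K := hKc.image_homothety_subset hp (Ioo_subset_Icc_self hr)
  have hT : MeasurableSet T := (hK.image (AffineMap.homothety_continuous p r)).measurableSet
  have hint : IntegrableOn (fun x => ℓ x - ℓ p) K μ :=
    (by fun_prop : Continuous fun x => ℓ x - ℓ p).continuousOn.integrableOn_compact hK
  have hTint :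
      ∫ x in T, (ℓ x - ℓ p) ∂μ = r ^ (finrank ℝ E + 1) * ∫ x in K, (ℓ x - ℓ p) ∂μ := by
    have hℓ : ∀ x, ℓ (AffineMap.homothety p r x) - ℓ p = r * (ℓ x - ℓ p) := by
      intro x
      simp only [AffineMap.homothety_apply, vsub_eq_sub, vadd_eq_add, map_add, map_smul, map_sub,
        smul_eq_mul]
      ring
    rw [setIntegral_image_homothety μ _ p hr.1.ne' hK.measurableSet]
    simp only [hℓ, integral_const_mul, smul_eq_mul, abs_of_pos (pow_pos hr.1 _)]
    rw [pow_succ', mul_assoc]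
    exact mul_left_comm _ _ _
  have hTvol : μ.real T = r ^ finrank ℝ E * μ.real K := by
    rw [measureReal_def, Measure.addHaar_image_homothety, ENNReal.toReal_mul,
      abs_of_pos (pow_pos hr.1 _), ENNReal.toReal_ofReal (pow_pos hr.1 _).le, measureReal_def]
  have hshell : ∫ x in K \ T, (ℓ x - ℓ p) ∂μ ≤ μ.real (K \ T) * (s - ℓ p) := by
    rw [← smul_eq_mul, ← setIntegral_const]
    refine setIntegral_mono_on (hint.mono_set sdiff_subset) (integrableOn_const ?_)
      (hK.measurableSet.diff hT) fun x hx => sub_le_sub_right (hs x hx.1) _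
    exact measure_ne_top_of_subset sdiff_subset hK.measure_lt_top.ne
  rw [setIntegral_sdiff hT hint hTK, measureReal_sdiff hTK hT hK.measure_lt_top.ne, hTint,
    hTvol] at hshell
  linarith

theorem Convex.subset_neg_smul_of_setIntegral_id_eq_zero {K : Set E} (hK : IsCompact K)
    (hKc : Convex ℝ K) (hKi : (interior K).Nonempty) (hcent : ∫ x in K, x ∂μ = 0) :
    K ⊆ (-(finrank ℝ E : ℝ)) • K := by
  intro p hp
  rw [Set.neg_smul_set, Set.mem_neg]
  by_contra hpK
  obtain ⟨ℓ, s, hℓ, hs⟩ :=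
    geometric_hahn_banach_closed_point (hKc.smul _) (hK.smul _).isClosed hpK
  obtain ⟨q, hq, hqmax⟩ := hK.exists_isMaxOn ⟨p, hp⟩ ℓ.continuous.continuousOn
  have hsep : finrank ℝ E * ℓ q < -ℓ p := by
    simpa using (hℓ _ (smul_mem_smul_set hq)).trans hs
  have hV : 0 < μ.real K :=
    ENNReal.toReal_pos ((isOpen_interior.measure_pos μ hKi).trans_le
      (measure_mono interior_subset)).ne' hK.measure_lt_top.ne
  have hmean : ∫ x in K, (ℓ x - ℓ p) ∂μ = -(μ.real K * ℓ p) := by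
    have hℓ0 : ∫ x in K, ℓ x ∂μ = 0 := by
      rw [← map_zero ℓ, ← hcent]
      exact ℓ.integral_comp_comm (continuousOn_id.integrableOn_compact hK)
    rw [integral_sub (ℓ.continuous.continuousOn.integrableOn_compact hK)
      (integrableOn_const hK.measure_lt_top.ne), hℓ0, setIntegral_const, smul_eq_mul, zero_sub]
  have key := hKc.mul_setIntegral_sub_le μ hK hp ℓ fun x hx => hqmax hx
  rw [hmean] at key
  nlinarith [mul_lt_mul_of_pos_left hsep hV]

end AddHaar

/-- If the centroid of a convex body `K ⊆ ℝⁿ` is the origin, then `K ⊆ -nK`. -/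
theorem centroid_subset_neg_smul {n : ℕ} (K : Set (EuclideanSpace ℝ (Fin n)))
    (hK : IsCompact K) (hKc : Convex ℝ K) (hKi : (interior K).Nonempty)
    (hcent : ∫ x in K, x = (0 : EuclideanSpace ℝ (Fin n))) :
    K ⊆ (-(n : ℝ)) • K := by
  simpa using hKc.subset_neg_smul_of_setIntegral_id_eq_zero volume hK hKi hcent
end

section
/- Let Λ be a finite set and ℋ a finite family of subsets of Λ with fractional covering number τ* = τ*(Λ,ℋ). Then τ(Λ,ℋ) ≤ ⌊1 + ln|Λ| / (−ln(1 − 1/τ*))⌋, provided τ* > 1. -/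
/-- The covering number `τ(Λ, ℋ)`: the least number of members of `ℋ` whose union
contains `Λ`. -/
noncomputable def tauCov {α : Type*} [DecidableEq α] (Λ : Finset α) (H : Finset (Finset α)) : ℕ :=
  sInf {m : ℕ | ∃ C : Finset (Finset α), C ⊆ H ∧ C.card = m ∧ ∀ p ∈ Λ, ∃ S ∈ C, p ∈ S}

/-- The fractional covering number `τ*(Λ, ℋ)`. -/
noncomputable def tauStar {α : Type*} [DecidableEq α] (Λ : Finset α) (H : Finset (Finset α)) : ℝ :=
  sInf {s : ℝ | ∃ μ : Finset α → ℝ, (∀ S, 0 ≤ μ S) ∧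
    (∀ p ∈ Λ, 1 ≤ ∑ S ∈ H, if p ∈ S then μ S else 0) ∧ s = ∑ S ∈ H, μ S}

section Aux

variable {α : Type*} [DecidableEq α]

lemma tauStar_set_nonempty (Λ : Finset α) (H : Finset (Finset α))
    (hcov : ∀ p ∈ Λ, ∃ S ∈ H, p ∈ S) :
    {s : ℝ | ∃ μ : Finset α → ℝ, (∀ S, 0 ≤ μ S) ∧
      (∀ p ∈ Λ, 1 ≤ ∑ S ∈ H, if p ∈ S then μ S else 0) ∧ s = ∑ S ∈ H, μ S}.Nonempty := by
  refine ⟨∑ S ∈ H, (1:ℝ), fun _ => 1, fun _ => zero_le_one, fun p hp => ?_, rfl⟩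
  obtain ⟨S, hS, hpS⟩ := hcov p hp
  calc (1:ℝ) = ∑ T ∈ {S}, if p ∈ T then (1:ℝ) else 0 := by
        rw [Finset.sum_singleton, if_pos hpS]
    _ ≤ ∑ T ∈ H, if p ∈ T then (1:ℝ) else 0 :=
        Finset.sum_le_sum_of_subset_of_nonneg (Finset.singleton_subset_iff.2 hS)
          (by intros; split <;> norm_num)

lemma exists_heavy (Λ : Finset α) (H : Finset (Finset α))
    (hcov : ∀ p ∈ Λ, ∃ S ∈ H, p ∈ S) (ht : 0 < tauStar Λ H)
    (R : Finset α) (hR : R ⊆ Λ) (hRne : R.Nonempty) :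
    ∃ S ∈ H, (R.card : ℝ) / tauStar Λ H ≤ ((R.filter (· ∈ S)).card : ℝ) := by
  obtain ⟨p, hp⟩ := hRne
  obtain ⟨S₁, hS₁, hpS₁⟩ := hcov p (hR hp)
  obtain ⟨S₀, hS₀, hmax⟩ := Finset.exists_max_image H
    (fun S => (R.filter (· ∈ S)).card) ⟨S₁, hS₁⟩
  set M : ℕ := (R.filter (· ∈ S₀)).card with hM
  have hM1 : 1 ≤ M := by
    calc 1 ≤ (R.filter (· ∈ S₁)).card :=
          Finset.card_pos.2 ⟨p, Finset.mem_filter.2 ⟨hp, hpS₁⟩⟩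
      _ ≤ M := hmax S₁ hS₁
  have hMpos : (0:ℝ) < M := by exact_mod_cast hM1
  have hlb : ∀ s ∈ {s : ℝ | ∃ μ : Finset α → ℝ, (∀ S, 0 ≤ μ S) ∧
      (∀ p ∈ Λ, 1 ≤ ∑ S ∈ H, if p ∈ S then μ S else 0) ∧ s = ∑ S ∈ H, μ S},
      (R.card : ℝ) / M ≤ s := by
    rintro s ⟨μ, hμ0, hμc, rfl⟩
    rw [div_le_iff₀ hMpos]
    calc (R.card : ℝ) = ∑ _q ∈ R, (1:ℝ) := by simp
      _ ≤ ∑ q ∈ R, ∑ S ∈ H, (if q ∈ S then μ S else 0) :=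
          Finset.sum_le_sum fun q hq => hμc q (hR hq)
      _ = ∑ S ∈ H, ∑ q ∈ R, (if q ∈ S then μ S else 0) := Finset.sum_comm
      _ = ∑ S ∈ H, ((R.filter (· ∈ S)).card : ℝ) * μ S := by
          refine Finset.sum_congr rfl fun S _ => ?_
          rw [← Finset.sum_filter, Finset.sum_const, nsmul_eq_mul]
      _ ≤ ∑ S ∈ H, (M:ℝ) * μ S := Finset.sum_le_sum fun S hS =>
          mul_le_mul_of_nonneg_right (by exact_mod_cast hmax S hS) (hμ0 S)
      _ = (∑ S ∈ H, μ S) * M := by rw [← Finset.mul_sum]; ring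
  have h1 : (R.card : ℝ) / M ≤ tauStar Λ H :=
    le_csInf (tauStar_set_nonempty Λ H hcov) hlb
  refine ⟨S₀, hS₀, ?_⟩
  rw [div_le_iff₀ ht]
  rw [div_le_iff₀ hMpos] at h1
  linarith

lemma greedy (Λ : Finset α) (H : Finset (Finset α))
    (hcov : ∀ p ∈ Λ, ∃ S ∈ H, p ∈ S) (ht : 1 < tauStar Λ H) (k : ℕ) :
    ∃ C : Finset (Finset α), C ⊆ H ∧ C.card ≤ k ∧
      ((Λ.filter (fun p => ∀ S ∈ C, p ∉ S)).card : ℝ) ≤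
        (Λ.card : ℝ) * (1 - 1 / tauStar Λ H) ^ k := by
  have ht0 : 0 < tauStar Λ H := lt_trans one_pos ht
  have hq0 : 0 ≤ 1 - 1 / tauStar Λ H := by
    have : 1 / tauStar Λ H < 1 := by rw [div_lt_one ht0]; exact ht
    linarith
  induction k with
  | zero =>
      refine ⟨∅, by simp, by simp, ?_⟩
      simp
  | succ k ih =>
      obtain ⟨C, hCH, hCk, hcard⟩ := ih
      set R := Λ.filter (fun p => ∀ S ∈ C, p ∉ S) with hRdef
      rcases R.eq_empty_or_nonempty with hRe | hRne
      · refine ⟨C, hCH, le_trans hCk (Nat.le_succ k), ?_⟩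
        rw [← hRdef, hRe]
        simp only [Finset.card_empty, Nat.cast_zero]
        positivity
      · obtain ⟨S₀, hS₀, hheavy⟩ := exists_heavy Λ H hcov ht0 R
          (Finset.filter_subset _ _) hRne
        refine ⟨insert S₀ C, Finset.insert_subset hS₀ hCH,
          le_trans (Finset.card_insert_le _ _) (Nat.succ_le_succ hCk), ?_⟩
        have hfilt : Λ.filter (fun p => ∀ S ∈ insert S₀ C, p ∉ S)
            = R.filter (fun p => p ∉ S₀) := by
          rw [hRdef, Finset.filter_filter]
          apply Finset.filter_congr
          intro p _
          simp [Finset.forall_mem_insert, and_comm]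
        have hsplit : ((R.filter (fun p => p ∉ S₀)).card : ℝ)
            = (R.card : ℝ) - ((R.filter (· ∈ S₀)).card : ℝ) := by
          have := Finset.card_filter_add_card_filter_not
            (s := R) (p := (· ∈ S₀))
          have h2 : (R.filter (· ∈ S₀)).card + (R.filter (fun p => ¬ p ∈ S₀)).card
              = R.card := this
          push_cast [← h2]
          ring
        rw [hfilt, hsplit]
        have step : (R.card : ℝ) - ((R.filter (· ∈ S₀)).card : ℝ)
            ≤ (R.card : ℝ) * (1 - 1 / tauStar Λ H) := by
          have := hheavy
          have hdiv : (R.card : ℝ) / tauStar Λ H ≤ ((R.filter (· ∈ S₀)).card : ℝ) := hheavy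
          have : (R.card : ℝ) * (1 - 1 / tauStar Λ H)
              = (R.card : ℝ) - (R.card : ℝ) / tauStar Λ H := by ring
          linarith
        calc (R.card : ℝ) - ((R.filter (· ∈ S₀)).card : ℝ)
            ≤ (R.card : ℝ) * (1 - 1 / tauStar Λ H) := step
          _ ≤ ((Λ.card : ℝ) * (1 - 1 / tauStar Λ H) ^ k) * (1 - 1 / tauStar Λ H) :=
              mul_le_mul_of_nonneg_right hcard hq0
          _ = (Λ.card : ℝ) * (1 - 1 / tauStar Λ H) ^ (k + 1) := by ring

end Aux

/-- The probabilistic bound `τ ≤ ⌊1 + ln|Λ| / (−ln(1 − 1/τ*))⌋`, valid when `τ* > 1`. -/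
theorem tau_le_floor {α : Type*} [DecidableEq α] (Λ : Finset α) (H : Finset (Finset α))
    (hne : Λ.Nonempty) (hcov : ∀ p ∈ Λ, ∃ S ∈ H, p ∈ S)
    (hstar : 1 < tauStar Λ H) :
    tauCov Λ H ≤
      ⌊1 + Real.log (Λ.card : ℝ) / (-Real.log (1 - 1 / tauStar Λ H))⌋₊ := by
  set t := tauStar Λ H with htdef
  set k := ⌊1 + Real.log (Λ.card : ℝ) / (-Real.log (1 - 1 / t))⌋₊ with hkdef
  have ht0 : 0 < t := lt_trans one_pos hstar
  have hq0 : 0 < 1 - 1 / t := by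
    have : 1 / t < 1 := by rw [div_lt_one ht0]; exact hstar
    linarith
  have hq1 : 1 - 1 / t < 1 := by
    have : 0 < 1 / t := by positivity
    linarith
  have hL : 0 < -Real.log (1 - 1 / t) := by
    have := Real.log_neg hq0 hq1
    linarith
  have hn0 : 0 < (Λ.card : ℝ) := by exact_mod_cast Finset.card_pos.2 hne
  have hk1 : Real.log (Λ.card : ℝ) / (-Real.log (1 - 1 / t)) < (k : ℝ) := by
    have h := Nat.sub_one_lt_floor (1 + Real.log (Λ.card : ℝ) / (-Real.log (1 - 1 / t)))
    rw [← hkdef] at h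
    linarith
  have hkey : (Λ.card : ℝ) * (1 - 1 / t) ^ k < 1 := by
    have hlogn : Real.log (Λ.card : ℝ) + (k : ℝ) * Real.log (1 - 1 / t) < 0 := by
      rw [div_lt_iff₀ hL] at hk1
      nlinarith
    have hpow : (1 - 1 / t) ^ k = Real.exp ((k : ℝ) * Real.log (1 - 1 / t)) := by
      rw [← Real.exp_log hq0, ← Real.exp_nat_mul, Real.log_exp]
    calc (Λ.card : ℝ) * (1 - 1 / t) ^ k
        = Real.exp (Real.log (Λ.card : ℝ)) * Real.exp ((k : ℝ) * Real.log (1 - 1 / t)) := by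
          rw [Real.exp_log hn0, hpow]
      _ = Real.exp (Real.log (Λ.card : ℝ) + (k : ℝ) * Real.log (1 - 1 / t)) :=
          (Real.exp_add _ _).symm
      _ < 1 := Real.exp_lt_one_iff.2 hlogn
  obtain ⟨C, hCH, hCk, hcard⟩ := greedy Λ H hcov hstar k
  have hRzero : (Λ.filter (fun p => ∀ S ∈ C, p ∉ S)).card = 0 := by
    have hlt : ((Λ.filter (fun p => ∀ S ∈ C, p ∉ S)).card : ℝ) < 1 :=
      lt_of_le_of_lt hcard hkey
    have : (Λ.filter (fun p => ∀ S ∈ C, p ∉ S)).card < 1 := by exact_mod_cast hlt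
    omega
  have hcover : ∀ p ∈ Λ, ∃ S ∈ C, p ∈ S := by
    intro p hp
    by_contra hcon
    push_neg at hcon
    have : p ∈ Λ.filter (fun p => ∀ S ∈ C, p ∉ S) :=
      Finset.mem_filter.2 ⟨hp, hcon⟩
    rw [Finset.card_eq_zero] at hRzero
    simp [hRzero] at this
  have hmem : C.card ∈ {m : ℕ | ∃ C' : Finset (Finset α), C' ⊆ H ∧ C'.card = m ∧
      ∀ p ∈ Λ, ∃ S ∈ C', p ∈ S} := ⟨C, hCH, rfl, hcover⟩
  exact le_trans (Nat.sInf_le hmem) hCk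
end

section
/- For bounded Borel measurable sets K and L in ℝⁿ with L of positive volume, the fractional covering number satisfies N*(K, L) ≤ vol(K − L)/vol(L), witnessed by the measure μ = (1/vol(L)) · Lebesgue restricted to K − L. -/
open Pointwise MeasureTheory

/-- The fractional covering number `N*(K, L)`: infimum of total masses of Borel
measures `μ` with `μ(x − L) ≥ 1` for every `x ∈ K`. -/
noncomputable def fracN {n : ℕ} (K L : Set (EuclideanSpace ℝ (Fin n))) : ENNReal :=
  sInf {m : ENNReal | ∃ μ : Measure (EuclideanSpace ℝ (Fin n)),
    (∀ x ∈ K, 1 ≤ μ ((fun l => x - l) '' L)) ∧ m = μ Set.univ}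

/-- `N*(K, L) ≤ vol(K − L)/vol(L)`, witnessed by `(1/vol L) ⬝ Lebesgue` restricted
to `K − L`. -/
theorem fracN_le_volume_ratio {n : ℕ} (K L : Set (EuclideanSpace ℝ (Fin n)))
    (hKm : MeasurableSet K) (hKb : Bornology.IsBounded K)
    (hLm : MeasurableSet L) (hLb : Bornology.IsBounded L)
    (hLvol : 0 < volume L) :
    (∀ x ∈ K, 1 ≤ ((volume L)⁻¹ • volume.restrict (K - L)) ((fun l => x - l) '' L)) ∧
      fracN K L ≤ volume (K - L) / volume L := by
  have hLne : volume L ≠ 0 := hLvol.ne'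
  have hLfin : volume L ≠ ⊤ := hLb.measure_lt_top.ne
  have himg : ∀ x : EuclideanSpace ℝ (Fin n),
      (fun l => x - l) '' L = (fun y => x - y) ⁻¹' L := by
    intro x
    ext y; constructor
    · rintro ⟨l, hl, rfl⟩; simpa using hl
    · intro hy; exact ⟨x - y, hy, by simp⟩
  have hvol : ∀ x : EuclideanSpace ℝ (Fin n),
      volume ((fun l => x - l) '' L) = volume L := by
    intro x
    rw [himg]
    have : (fun y : EuclideanSpace ℝ (Fin n) => x - y) ⁻¹' L
        = Neg.neg ⁻¹' ((fun y => x + y) ⁻¹' L) := by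
      ext y; simp [sub_eq_add_neg]
    rw [this, Measure.measure_preimage_neg volume, measure_preimage_add]
  have hmeas : ∀ x : EuclideanSpace ℝ (Fin n),
      MeasurableSet ((fun l => x - l) '' L) := by
    intro x
    rw [himg]
    exact (measurable_const.sub measurable_id) hLm
  have hsub : ∀ x ∈ K, (fun l => x - l) '' L ⊆ K - L := by
    rintro x hx y ⟨l, hl, rfl⟩
    exact Set.sub_mem_sub hx hl
  have key : ∀ x ∈ K,
      1 ≤ ((volume L)⁻¹ • volume.restrict (K - L)) ((fun l => x - l) '' L) := by
    intro x hx
    rw [Measure.smul_apply, Measure.restrict_apply (hmeas x),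
      Set.inter_eq_self_of_subset_left (hsub x hx), hvol x, smul_eq_mul,
      ENNReal.inv_mul_cancel hLne hLfin]
  refine ⟨key, ?_⟩
  apply sInf_le
  refine ⟨(volume L)⁻¹ • volume.restrict (K - L), key, ?_⟩
  rw [Measure.smul_apply, Measure.restrict_apply_univ, smul_eq_mul,
    ENNReal.div_eq_inv_mul]
end

section
/- For any centrally symmetric convex body K in ℝⁿ, the fractional illumination number satisfies i*(K) = N*(K, int K) ≤ 2ⁿ. -/
open Pointwise MeasureTheory

/-- For a centrally symmetric convex body `K`, the fractional illumination number
`i*(K) = N*(K, int K)` is at most `2ⁿ`. -/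
theorem fracIllum_le_two_pow {n : ℕ} (K : Set (EuclideanSpace ℝ (Fin n)))
    (hK : IsCompact K) (hKc : Convex ℝ K) (hKi : (interior K).Nonempty)
    (hsym : K = -K) :
    fracN K (interior K) ≤ 2 ^ n := by
  classical
  have hrank : Module.finrank ℝ (EuclideanSpace ℝ (Fin n)) = n := by
    simp [finrank_euclideanSpace]
  set v := volume (interior K) with hv
  have hv0 : v ≠ 0 := (isOpen_interior.measure_pos volume hKi).ne'
  have hvtop : v ≠ ⊤ :=
    ne_top_of_le_ne_top hK.measure_lt_top.ne (measure_mono interior_subset)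
  have hvK : volume K = v := by
    have hfr : volume (frontier K) = 0 := hKc.addHaar_frontier volume
    refine le_antisymm ?_ (measure_mono interior_subset)
    have hsub : K ⊆ interior K ∪ frontier K := by
      intro x hx
      by_cases h : x ∈ interior K
      · exact Or.inl h
      · exact Or.inr ⟨subset_closure hx, h⟩
    calc volume K ≤ volume (interior K ∪ frontier K) := measure_mono hsub
      _ ≤ volume (interior K) + volume (frontier K) := measure_union_le _ _
      _ = v := by rw [hfr, add_zero]
  set c : ENNReal := 2 ^ n * v⁻¹ with hc
  set μ : Measure (EuclideanSpace ℝ (Fin n)) := c • volume.restrict K with hμ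
  have hintsym : interior K = -interior K := by
    conv_lhs => rw [hsym]
    rw [← Set.image_neg_eq_neg, ← Set.image_neg_eq_neg]
    exact ((Homeomorph.neg (EuclideanSpace ℝ (Fin n))).image_interior K).symm
  refine sInf_le ⟨μ, ?_, ?_⟩
  · intro x hx
    -- the set of midpoints
    have key : (fun y => (2:ℝ)⁻¹ • (x + y)) '' interior K ⊆
        K ∩ ((fun l => x - l) '' interior K) := by
      rintro z ⟨y, hy, rfl⟩
      refine ⟨?_, ?_⟩
      · show (2:ℝ)⁻¹ • (x + y) ∈ K
        have : (2:ℝ)⁻¹ • y + (2:ℝ)⁻¹ • x ∈ interior K :=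
          hKc.combo_interior_self_mem_interior hy hx (by norm_num) (by norm_num) (by norm_num)
        have h2 : (2:ℝ)⁻¹ • (x + y) = (2:ℝ)⁻¹ • y + (2:ℝ)⁻¹ • x := by
          rw [smul_add]; abel
        rw [h2]
        exact interior_subset this
      · refine ⟨(2:ℝ)⁻¹ • (-y) + (2:ℝ)⁻¹ • x, ?_, ?_⟩
        · have hny : -y ∈ interior K := by
            rw [hintsym]; exact Set.neg_mem_neg.mpr hy
          exact hKc.combo_interior_self_mem_interior hny hx (by norm_num) (by norm_num)
            (by norm_num)
        · show x - ((2:ℝ)⁻¹ • -y + (2:ℝ)⁻¹ • x) = (2:ℝ)⁻¹ • (x + y)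
          module
    -- volume of the midpoint set
    have himg : (fun y => (2:ℝ)⁻¹ • (x + y)) '' interior K =
        (2:ℝ)⁻¹ • ((x + ·) '' interior K) := by
      rw [← Set.image_smul, Set.image_image]
    have hvol : volume ((fun y => (2:ℝ)⁻¹ • (x + y)) '' interior K)
        = ENNReal.ofReal (|(2:ℝ)⁻¹| ^ n) * v := by
      rw [himg, Measure.addHaar_smul, hrank, abs_pow]
      congr 1
      have h3 : (x + ·) '' interior K = x +ᵥ interior K := rfl
      rw [h3, measure_vadd]
    have hmeas : MeasurableSet ((fun l => x - l) '' interior K) := by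
      have : (fun l => x - l) '' interior K = x +ᵥ (-interior K) := by
        ext z
        simp only [Set.mem_image, Set.mem_vadd_set, Set.mem_neg]
        constructor
        · rintro ⟨l, hl, rfl⟩; exact ⟨-l, by simpa using hl, by simp [sub_eq_add_neg]⟩
        · rintro ⟨w, hw, rfl⟩; exact ⟨-w, by simpa using hw, by simp [sub_eq_add_neg]⟩
      rw [this]
      exact ((isOpen_interior.neg).vadd x).measurableSet
    have hsubK : (fun y => (2:ℝ)⁻¹ • (x + y)) '' interior K ⊆
        ((fun l => x - l) '' interior K) ∩ K := fun z hz => ⟨(key hz).2, (key hz).1⟩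
    have h1 : μ ((fun l => x - l) '' interior K)
        = c * volume (((fun l => x - l) '' interior K) ∩ K) := by
      rw [hμ, Measure.smul_apply, Measure.restrict_apply hmeas, smul_eq_mul]
    rw [h1]
    calc (1 : ENNReal) = 2 ^ n * v⁻¹ * (ENNReal.ofReal (|(2:ℝ)⁻¹| ^ n) * v) := by
          have h2 : ENNReal.ofReal (|(2:ℝ)⁻¹| ^ n) = (2 : ENNReal)⁻¹ ^ n := by
            rw [abs_of_pos (by norm_num : (0:ℝ) < 2⁻¹), ENNReal.ofReal_pow (by norm_num)]
            congr 1
            rw [ENNReal.ofReal_inv_of_pos (by norm_num), ENNReal.ofReal_ofNat]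
          rw [h2]
          have e1 : (2:ENNReal) ^ n * v⁻¹ * ((2:ENNReal)⁻¹ ^ n * v)
              = ((2:ENNReal) ^ n * (2:ENNReal)⁻¹ ^ n) * (v⁻¹ * v) := by ring
          rw [e1, ← mul_pow, ENNReal.mul_inv_cancel (by norm_num) (by norm_num),
            ENNReal.inv_mul_cancel hv0 hvtop, one_pow, one_mul]
      _ = c * volume ((fun y => (2:ℝ)⁻¹ • (x + y)) '' interior K) := by rw [hvol, hc]
      _ ≤ c * volume (((fun l => x - l) '' interior K) ∩ K) := by
          exact mul_le_mul_right (measure_mono hsubK) c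
  · rw [hμ, Measure.smul_apply, Measure.restrict_apply_univ, hvK, smul_eq_mul, hc,
      mul_assoc, ENNReal.inv_mul_cancel hv0 hvtop, mul_one]
end

section
/- For every origin-symmetric convex body K in ℝⁿ and every vector z ∈ ℝⁿ, the Gaussian measure satisfies γₙ(K + z) ≥ e^{−|z|²/2} · γₙ(K). -/
open MeasureTheory Pointwise Real

/-- The standard Gaussian probability measure on `ℝⁿ`, with density
`(2π)^{-n/2} e^{-|x|²/2}` with respect to Lebesgue measure. -/
noncomputable def gaussianMeasure (n : ℕ) : Measure (EuclideanSpace ℝ (Fin n)) :=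
  volume.withDensity
    (fun x => ENNReal.ofReal ((2 * π) ^ (-(n : ℝ) / 2) * Real.exp (-‖x‖ ^ 2 / 2)))

/-!
Write `φ` for the Gaussian density. Translation invariance of Lebesgue measure gives
`γₙ(z + K) = ∫_K φ(z + x) dx`, and the symmetry `K = -K` turns this into `∫_K φ(z - x) dx`.
Averaging the two, it suffices that `φ(z + x) + φ(z - x) ≥ 2 e^{-|z|²/2} φ(x)` pointwise, which holds
because the left side equals `2 e^{-|z|²/2} φ(x) cosh ⟨z, x⟩`.
-/

open scoped ENNReal

section

variable {G : Type*} [AddGroup G] [MeasurableSpace G] {μ : Measure G} {f : G → ℝ≥0∞} {K : Set G}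

theorem withDensity_vadd_apply [MeasurableAdd G] [μ.IsAddLeftInvariant] (hf : Measurable f)
    (hK : MeasurableSet K) (z : G) :
    μ.withDensity f (z +ᵥ K) = ∫⁻ x in K, f (z + x) ∂μ := by
  have hpre : (z + ·) ⁻¹' (z +ᵥ K) = K := by
    ext x; simp [Set.mem_vadd_set, vadd_eq_add]
  rw [withDensity_apply _ (hK.const_vadd z),
    ← (measurePreserving_add_left μ z).setLIntegral_comp_preimage (hK.const_vadd z) hf, hpre]

theorem setLIntegral_comp_neg_of_neg_eq [MeasurableNeg G] [μ.IsNegInvariant]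
    (hf : Measurable f) (hKm : MeasurableSet K) (hK : -K = K) :
    ∫⁻ x in K, f (-x) ∂μ = ∫⁻ x in K, f x ∂μ := by
  have := (Measure.measurePreserving_neg μ).setLIntegral_comp_preimage hKm hf
  rwa [show Neg.neg ⁻¹' K = K from hK] at this

theorem mul_withDensity_le_withDensity_vadd [MeasurableAdd G] [MeasurableNeg G]
    [μ.IsAddLeftInvariant] [μ.IsNegInvariant] (hf : Measurable f) (hKm : MeasurableSet K)
    (hK : -K = K) {c : ℝ≥0∞} {z : G} (hfz : ∀ x, 2 * c * f x ≤ f (z + x) + f (z - x)) :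
    c * μ.withDensity f K ≤ μ.withDensity f (z +ᵥ K) := by
  have hfz_add : Measurable fun x => f (z + x) := hf.comp (measurable_const_add z)
  rw [← ENNReal.mul_le_mul_iff_right two_ne_zero ENNReal.ofNat_ne_top]
  calc 2 * (c * μ.withDensity f K)
      = ∫⁻ x in K, 2 * c * f x ∂μ := by
        rw [withDensity_apply _ hKm, lintegral_const_mul _ hf, mul_assoc]
    _ ≤ ∫⁻ x in K, (f (z + x) + f (z + -x)) ∂μ := by
        simpa only [sub_eq_add_neg] using lintegral_mono hfz
    _ = 2 * μ.withDensity f (z +ᵥ K) := by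
        rw [lintegral_add_left hfz_add, setLIntegral_comp_neg_of_neg_eq hfz_add hKm hK,
          withDensity_vadd_apply hf hKm, two_mul]

end

section

variable {E : Type*} [NormedAddCommGroup E] [InnerProductSpace ℝ E]

theorem two_mul_exp_neg_sq_norm_mul_le (z x : E) :
    2 * (exp (-‖z‖ ^ 2 / 2) * exp (-‖x‖ ^ 2 / 2)) ≤
      exp (-‖z + x‖ ^ 2 / 2) + exp (-‖z - x‖ ^ 2 / 2) := by
  have h_add : exp (-‖z + x‖ ^ 2 / 2) =
      exp (-‖z‖ ^ 2 / 2) * exp (-‖x‖ ^ 2 / 2) * exp (-inner ℝ z x) := by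
    rw [← exp_add, ← exp_add, norm_add_sq_real]; ring_nf
  have h_sub : exp (-‖z - x‖ ^ 2 / 2) =
      exp (-‖z‖ ^ 2 / 2) * exp (-‖x‖ ^ 2 / 2) * exp (inner ℝ z x) := by
    rw [← exp_add, ← exp_add, norm_sub_sq_real]; ring_nf
  have h_cosh : 2 ≤ exp (inner ℝ z x) + exp (-inner ℝ z x) := by
    have := one_le_cosh (inner ℝ z x)
    rw [cosh_eq] at this
    linarith
  rw [h_add, h_sub]
  linarith [mul_le_mul_of_nonneg_left h_cosh
    (mul_nonneg (exp_pos (-‖z‖ ^ 2 / 2)).le (exp_pos (-‖x‖ ^ 2 / 2)).le)]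

theorem two_mul_ofReal_exp_neg_sq_norm_mul_le {C : ℝ} (hC : 0 ≤ C) (z x : E) :
    2 * ENNReal.ofReal (exp (-‖z‖ ^ 2 / 2)) * ENNReal.ofReal (C * exp (-‖x‖ ^ 2 / 2)) ≤
      ENNReal.ofReal (C * exp (-‖z + x‖ ^ 2 / 2)) +
        ENNReal.ofReal (C * exp (-‖z - x‖ ^ 2 / 2)) := by
  rw [← ENNReal.ofReal_ofNat, ← ENNReal.ofReal_mul zero_le_two,
    ← ENNReal.ofReal_mul (by positivity), ← ENNReal.ofReal_add (by positivity) (by positivity)]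
  refine ENNReal.ofReal_le_ofReal ?_
  linarith [mul_le_mul_of_nonneg_left (two_mul_exp_neg_sq_norm_mul_le z x) hC]

end

theorem gaussian_translate_general {n : ℕ} (K : Set (EuclideanSpace ℝ (Fin n)))
    (hK : IsCompact K) (hsym : K = -K)
    (z : EuclideanSpace ℝ (Fin n)) :
    ENNReal.ofReal (Real.exp (-‖z‖ ^ 2 / 2)) * gaussianMeasure n K ≤
      gaussianMeasure n (z +ᵥ K) :=
  mul_withDensity_le_withDensity_vadd (by fun_prop) hK.measurableSet hsym.symm
    (two_mul_ofReal_exp_neg_sq_norm_mul_le (by positivity) z)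

/-- For an origin-symmetric convex body `K` and any `z ∈ ℝⁿ`,
`γₙ(K + z) ≥ e^{−|z|²/2} γₙ(K)`. -/
theorem gaussian_translate {n : ℕ} (K : Set (EuclideanSpace ℝ (Fin n)))
    (hK : IsCompact K) (hKc : Convex ℝ K) (hKi : (interior K).Nonempty)
    (hsym : K = -K) (z : EuclideanSpace ℝ (Fin n)) :
    ENNReal.ofReal (Real.exp (-‖z‖ ^ 2 / 2)) * gaussianMeasure n K ≤
      gaussianMeasure n (z +ᵥ K) :=
  gaussian_translate_general K hK hsym z
end

section
/- Let C = [−1/2, 1/2]ⁿ and let (F_k) be a sequence of measurable subsets of C with Σ_k vol(F_k) = ∞. Then there exist translation vectors (x_k) such that vol(C \ ⋃_k (F_k + x_k)) = 0; in particular, the key inductive step holds: for any measurable E ⊆ C and measurable F ⊆ C, there exists x ∈ 2C with vol((F + x) ∩ E) ≥ 2^{−n} · vol(F) · vol(E). -/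
open MeasureTheory Pointwise
open scoped ENNReal

/-!
By Fubini and translation invariance, `∫ vol((x + G) ∩ E) dx = vol G ⬝ vol E`; the integrand
vanishes outside `E - G ⊆ 2C` and `vol(2C) = 2ⁿ`, so some `x ∈ 2C` does at least as well as
the average `2⁻ⁿ vol G ⬝ vol E`.

Choosing the translates greedily, the `k`-th one removes from the still uncovered part `R_k` of
`C` at least `2⁻ⁿ vol(F_k) ⬝ vol(R_k) ≥ 2⁻ⁿ vol(F_k) ⬝ ε`, where `ε` is the measure of the part
of `C` that is never covered. Summing, `ε ⬝ 2⁻ⁿ ∑ vol(F_k) ≤ vol C = 1`, forcing `ε = 0`.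
-/

section VAddInter

variable {G : Type*} [AddCommGroup G] [MeasurableSpace G] [MeasurableAdd₂ G] [MeasurableNeg G]
  {μ : Measure G} [SFinite μ] [μ.IsAddLeftInvariant] {A B : Set G}

theorem lintegral_measure_vadd_inter (hA : MeasurableSet A) (hB : MeasurableSet B) :
    ∫⁻ x, μ ((x +ᵥ A) ∩ B) ∂μ = μ A * μ B := by
  set P : Set (G × G) := {p | p.2 - p.1 ∈ A ∧ p.2 ∈ B}
  have hP : MeasurableSet P := ((measurable_snd.sub measurable_fst) hA).inter (measurable_snd hB)
  -- the shear `(x, a) ↦ (x, x + a)` turns the slices into translates of `B`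
  have hshear := measurePreserving_prod_add μ μ
  calc ∫⁻ x, μ ((x +ᵥ A) ∩ B) ∂μ = μ.prod μ P := by
        rw [Measure.prod_apply hP]
        refine lintegral_congr fun x => congrArg μ ?_
        ext y
        simp [P, Set.mem_vadd_set_iff_neg_vadd_mem, neg_add_eq_sub]
    _ = μ.prod μ ((fun z : G × G => (z.1, z.1 + z.2)) ⁻¹' P) :=
        (hshear.measure_preimage hP.nullMeasurableSet).symm
    _ = ∫⁻ a, A.indicator (fun _ => μ B) a ∂μ := by
        rw [Measure.prod_apply_symm (hshear.measurable hP)]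
        refine lintegral_congr fun a => ?_
        by_cases ha : a ∈ A
        · rw [Set.indicator_of_mem ha, ← measure_preimage_add_right μ a B]
          congr 1 with x
          simp [P, ha]
        · rw [Set.indicator_of_notMem ha]
          simp [P, ha]
    _ = μ A * μ B := by rw [lintegral_indicator_const hA, mul_comm]

theorem exists_mem_div_le_measure_vadd_inter {S : Set G} (hA : MeasurableSet A)
    (hB : MeasurableSet B) (hAB : B - A ⊆ S) (hS : NullMeasurableSet S μ) (hS₀ : μ S ≠ 0)
    (hA₁ : μ A ≠ ∞) (hB₁ : μ B ≠ ∞) :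
    ∃ x ∈ S, μ A * μ B / μ S ≤ μ ((x +ᵥ A) ∩ B) := by
  have hsupp : (fun x => μ ((x +ᵥ A) ∩ B)).support ⊆ S := by
    intro x hx
    obtain ⟨y, ⟨a, ha, rfl⟩, hy⟩ := nonempty_of_measure_ne_zero hx
    exact hAB ⟨x + a, hy, a, ha, add_sub_cancel_right x a⟩
  have hint : ∫⁻ x in S, μ ((x +ᵥ A) ∩ B) ∂μ = μ A * μ B := by
    rw [setLIntegral_eq_of_support_subset hsupp, lintegral_measure_vadd_inter hA hB]
  obtain ⟨x, hxS, hx⟩ := exists_setLAverage_le hS₀ hS (hint ▸ ENNReal.mul_ne_top hA₁ hB₁)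
  exact ⟨x, hxS, by rwa [setLAverage_eq, hint] at hx⟩

end VAddInter

theorem ENNReal.tsum_le_of_add_le_succ {a b : ℕ → ℝ≥0∞} (h : ∀ k, a (k + 1) + b k ≤ a k) :
    ∑' k, b k ≤ a 0 := by
  have key : ∀ N, a N + ∑ k ∈ Finset.range N, b k ≤ a 0 := by
    intro N
    induction N with
    | zero => simp
    | succ N ih =>
      calc a (N + 1) + ∑ k ∈ Finset.range (N + 1), b k
          = a (N + 1) + b N + ∑ k ∈ Finset.range N, b k := by rw [Finset.sum_range_succ]; ring
        _ ≤ a N + ∑ k ∈ Finset.range N, b k := by gcongr; exact h N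
        _ ≤ a 0 := ih
  exact ENNReal.tsum_le_of_sum_range_le fun N => le_add_self.trans (key N)

theorem exists_measure_diff_iUnion_eq_zero_of_tsum_eq_top {α X : Type*} [MeasurableSpace α]
    {μ : Measure α} {C : Set α} (hCm : MeasurableSet C) (hC : μ C ≠ ∞)
    {T : ℕ → X → Set α} (hT : ∀ k x, MeasurableSet (T k x)) {c : ℕ → ℝ≥0∞}
    (hc : ∑' k, c k = ∞)
    (hgood : ∀ k E, MeasurableSet E → E ⊆ C → ∃ x, c k * μ E ≤ μ (T k x ∩ E)) :
    ∃ x : ℕ → X, μ (C \ ⋃ k, T k (x k)) = 0 := by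
  let Piece := {E : Set α // MeasurableSet E ∧ E ⊆ C}
  choose step hstep using fun k (E : Piece) => hgood k E.1 E.2.1 E.2.2
  -- `R k` is the part of `C` left uncovered by the first `k` greedy translates
  let R : ℕ → Piece := fun k => Nat.rec ⟨C, hCm, subset_rfl⟩
    (fun k E => ⟨E.1 \ T k (step k E), E.2.1.diff (hT _ _), Set.sdiff_subset.trans E.2.2⟩) k
  let x k := step k (R k)
  have hsub : ∀ k, C \ ⋃ j, T j (x j) ⊆ (R k).1 := by
    intro k
    induction k with
    | zero => exact Set.sdiff_subset
    | succ k ih => exact fun y hy => ⟨ih hy, fun hk => hy.2 (Set.mem_iUnion.2 ⟨k, hk⟩)⟩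
  refine ⟨x, ?_⟩
  set ε := μ (C \ ⋃ k, T k (x k))
  have hdecr : ∀ k, μ (R (k + 1)).1 + c k * ε ≤ μ (R k).1 := fun k =>
    calc μ (R (k + 1)).1 + c k * ε ≤ μ (R (k + 1)).1 + μ (T k (x k) ∩ (R k).1) := by
          gcongr
          exact (mul_le_mul_right (measure_mono (hsub k)) _).trans (hstep k (R k))
      _ = μ (R k).1 := by rw [Set.inter_comm]; exact measure_sdiff_add_inter _ (hT _ _)
  have hbound := ENNReal.tsum_le_of_add_le_succ hdecr
  rw [ENNReal.tsum_mul_right, hc] at hbound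
  by_contra hε
  exact hC (top_le_iff.1 (ENNReal.top_mul hε ▸ hbound))

def unitCube (n : ℕ) : Set (EuclideanSpace ℝ (Fin n)) :=
  WithLp.ofLp ⁻¹' (Set.pi Set.univ fun _ : Fin n => Set.Icc (-(1/2) : ℝ) (1/2))

section unitCube

variable {n : ℕ}

theorem measurableSet_unitCube : MeasurableSet (unitCube n) :=
  (MeasurableSet.univ_pi fun _ => measurableSet_Icc).preimage (WithLp.measurable_ofLp 2 _)

theorem volume_unitCube : volume (unitCube n) = 1 := by
  rw [unitCube, (PiLp.volume_preserving_ofLp (Fin n)).measure_preimage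
    (MeasurableSet.univ_pi fun _ => measurableSet_Icc).nullMeasurableSet, volume_pi_pi]
  norm_num [Real.volume_Icc]

theorem volume_two_smul_unitCube : volume ((2 : ℝ) • unitCube n) = 2 ^ n := by
  rw [Measure.addHaar_smul, volume_unitCube, finrank_euclideanSpace_fin, mul_one, abs_pow,
    abs_two, ENNReal.ofReal_pow zero_le_two, ENNReal.ofReal_ofNat]

theorem unitCube_sub_unitCube_subset : unitCube n - unitCube n ⊆ (2 : ℝ) • unitCube n := by
  rintro _ ⟨a, ha, b, hb, rfl⟩
  refine ⟨(2 : ℝ)⁻¹ • (a - b), fun i _ => ?_, smul_inv_smul₀ two_ne_zero _⟩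
  have hai := ha i (Set.mem_univ i)
  have hbi := hb i (Set.mem_univ i)
  simp only [Set.mem_Icc, PiLp.smul_apply, PiLp.sub_apply, smul_eq_mul] at hai hbi ⊢
  constructor <;> linarith

end unitCube

theorem exists_mem_two_smul_unitCube_le_measure_vadd_inter {n : ℕ}
    {E G : Set (EuclideanSpace ℝ (Fin n))} (hE : MeasurableSet E) (hG : MeasurableSet G)
    (hEC : E ⊆ unitCube n) (hGC : G ⊆ unitCube n) :
    ∃ x ∈ (2 : ℝ) • unitCube n, (2 ^ n)⁻¹ * volume G * volume E ≤ volume ((x +ᵥ G) ∩ E) := by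
  have hfin {S} (hS : S ⊆ unitCube n) : volume S ≠ ∞ :=
    ne_top_of_le_ne_top (by simp [volume_unitCube]) (measure_mono hS)
  obtain ⟨x, hx, hle⟩ := exists_mem_div_le_measure_vadd_inter hG hE
    ((Set.sub_subset_sub hEC hGC).trans unitCube_sub_unitCube_subset)
    (measurableSet_unitCube.const_smul_of_ne_zero two_ne_zero).nullMeasurableSet
    (by simp [volume_unitCube]) (hfin hGC) (hfin hEC)
  rw [volume_two_smul_unitCube, ENNReal.div_eq_inv_mul, ← mul_assoc] at hle
  exact ⟨x, hx, hle⟩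

/-- Groemer's theorem (sufficiency direction, for subsets of the unit cube), together
with the key averaging step. Let `C = [−1/2, 1/2]ⁿ` and let `(F_k)` be measurable
subsets of `C` with infinite total volume. Then suitable translates of the `F_k`
cover almost all of `C`; moreover, for any measurable `E, F ⊆ C` there is a
translation vector `x ∈ 2C` with `vol((F + x) ∩ E) ≥ 2⁻ⁿ ⬝ vol(F) ⬝ vol(E)`. -/
theorem groemer_cover_ae {n : ℕ}
    (C : Set (EuclideanSpace ℝ (Fin n)))
    (hC : C = WithLp.ofLp ⁻¹' (Set.pi Set.univ fun _ : Fin n => Set.Icc (-(1/2) : ℝ) (1/2)))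
    (F : ℕ → Set (EuclideanSpace ℝ (Fin n)))
    (hFm : ∀ k, MeasurableSet (F k)) (hFC : ∀ k, F k ⊆ C)
    (htot : ∑' k, volume (F k) = ⊤) :
    (∃ x : ℕ → EuclideanSpace ℝ (Fin n),
        volume (C \ ⋃ k, (x k +ᵥ F k)) = 0) ∧
    (∀ E G : Set (EuclideanSpace ℝ (Fin n)), MeasurableSet E → MeasurableSet G →
      E ⊆ C → G ⊆ C →
      ∃ x ∈ (2 : ℝ) • C,
        ((2 : ENNReal) ^ n)⁻¹ * volume G * volume E ≤ volume ((x +ᵥ G) ∩ E)) := by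
  obtain rfl : C = unitCube n := hC
  have hstep := @exists_mem_two_smul_unitCube_le_measure_vadd_inter n
  refine ⟨?_, fun E G hE hG hEC hGC => hstep hE hG hEC hGC⟩
  refine exists_measure_diff_iUnion_eq_zero_of_tsum_eq_top measurableSet_unitCube
    (by simp [volume_unitCube]) (fun k x => (hFm k).const_vadd x)
    (c := fun k => (2 ^ n)⁻¹ * volume (F k)) ?_ fun k E hE hEC => ?_
  · rw [ENNReal.tsum_mul_left, htot]
    exact ENNReal.mul_top (by simp)
  · obtain ⟨x, -, hx⟩ := hstep hE (hFm k) hEC (hFC k)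
    exact ⟨x, hx⟩
end
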